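/- arXiv:2602.16208 — 3 statements merged into one kernel-verified Lean document; each statement's English description precedes it below -/
import Mathlib

section
/- If f belongs to the class S*_B, then the fourth Taylor coefficient of f satisfies |a_4| ≤ 19/36. -/
open Complex Metric

/-- The `n`-th Taylor coefficient of `f` at `0`. -/
noncomputable def taylorCoeff (f : ℂ → ℂ) (n : ℕ) : ℂ :=
  iteratedDeriv n f 0 / n.factorial

/-- Membership in the class `S*_B`: `f` is analytic on the unit disk, normalized by
`f(0) = 0` and `f'(0) = 1`, and there is a Schwarz function `w` with
`z f'(z) (1 - log(1 + w z)) = f z` on the unit disk. -/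
def IsSB (f : ℂ → ℂ) : Prop :=
  DifferentiableOn ℂ f (ball (0:ℂ) 1) ∧ f 0 = 0 ∧ deriv f 0 = 1 ∧
  ∃ w : ℂ → ℂ, DifferentiableOn ℂ w (ball (0:ℂ) 1) ∧ w 0 = 0 ∧
    (∀ z ∈ ball (0:ℂ) 1, ‖w z‖ < 1) ∧
    (∀ z ∈ ball (0:ℂ) 1, z * deriv f z * (1 - Complex.log (1 + w z)) = f z)

/-!
Put `L = log (1 + w)`. Comparing coefficients in `f = z f' (1 - L)` and `w' = (1 + w) L'` gives
`3 a₄ = c₃ + (5/2) c₁ c₂ + (19/12) c₁³`, where `w = ∑ cₙ zⁿ`. Two steps of the Schur algorithm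
(`g ↦ (g - g 0) / (z (1 - conj (g 0) g))`, applied to `w / z` and then to the result) parametrize
`c₂ = d₀ (1 - |c₁|²)` and `c₃ = d₁ (1 - |c₁|²) - d₀ c̄₁ c₂` with `|c₁|, |d₀| ≤ 1` and
`|d₁| ≤ 1 - |d₀|²`. With this parametrization the bound `|c₃ + (5/2) c₁ c₂ + (19/12) c₁³| ≤ 19/12`
reduces, via the triangle inequality, to a polynomial inequality in `|c₁|²`, `|d₀|²` and
`Re (d₀ c̄₁²)`, which follows by completing the square.
-/

open Filter Topology Finset Set
open scoped ComplexConjugate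

section TaylorCoeff

variable {f g : ℂ → ℂ} {n : ℕ}

lemma taylorCoeff_zero (f : ℂ → ℂ) : taylorCoeff f 0 = f 0 := by
  simp [taylorCoeff]

lemma taylorCoeff_one (f : ℂ → ℂ) : taylorCoeff f 1 = deriv f 0 := by
  simp [taylorCoeff]

lemma taylorCoeff_deriv (f : ℂ → ℂ) (n : ℕ) :
    taylorCoeff (deriv f) n = (n + 1) * taylorCoeff f (n + 1) := by
  simp only [taylorCoeff, iteratedDeriv_succ', Nat.factorial_succ, Nat.cast_mul, Nat.cast_succ]
  field_simp

lemma Filter.EventuallyEq.taylorCoeff_eq (h : f =ᶠ[𝓝 0] g) (n : ℕ) :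
    taylorCoeff f n = taylorCoeff g n := by
  rw [taylorCoeff, taylorCoeff, h.iteratedDeriv_eq]

lemma taylorCoeff_const_sub (hn : n ≠ 0) (c : ℂ) :
    taylorCoeff (fun z => c - f z) n = -taylorCoeff f n := by
  rw [taylorCoeff, iteratedDeriv_const_sub (Nat.pos_of_ne_zero hn), iteratedDeriv_neg, neg_div,
    taylorCoeff]

lemma taylorCoeff_const_add (hn : n ≠ 0) (c : ℂ) :
    taylorCoeff (fun z => c + f z) n = taylorCoeff f n := by
  rw [taylorCoeff, iteratedDeriv_const_add (Nat.pos_of_ne_zero hn), taylorCoeff]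

lemma taylorCoeff_const_mul (c : ℂ) : taylorCoeff (fun z => c * f z) n = c * taylorCoeff f n := by
  rw [taylorCoeff, iteratedDeriv_const_mul_field, mul_div_assoc, taylorCoeff]

lemma taylorCoeff_mul (hf : ContDiffAt ℂ n f 0) (hg : ContDiffAt ℂ n g 0) :
    taylorCoeff (fun z => f z * g z) n =
      ∑ i ∈ range (n + 1), taylorCoeff f i * taylorCoeff g (n - i) := by
  rw [taylorCoeff, iteratedDeriv_fun_mul hf hg, sum_div]
  refine sum_congr rfl fun i hi => ?_
  rw [Nat.cast_choose ℂ (mem_range_succ_iff.mp hi), taylorCoeff, taylorCoeff]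
  have : (n.factorial : ℂ) ≠ 0 := by exact_mod_cast n.factorial_ne_zero
  have : (i.factorial : ℂ) ≠ 0 := by exact_mod_cast i.factorial_ne_zero
  have : ((n - i).factorial : ℂ) ≠ 0 := by exact_mod_cast (n - i).factorial_ne_zero
  field_simp

lemma taylorCoeff_id_mul (hf : ContDiffAt ℂ ↑(n + 1) f 0) :
    taylorCoeff (fun z => z * f z) (n + 1) = taylorCoeff f n := by
  rw [taylorCoeff_mul (f := fun z => z) contDiffAt_id hf, sum_range_succ', sum_eq_single 0]
  · simp [taylorCoeff, iteratedDeriv_fun_id_zero]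
  · intro i _ hi
    simp [taylorCoeff, iteratedDeriv_fun_id_zero, hi]
  · simp

end TaylorCoeff

section Coefficients

variable {f w L : ℂ → ℂ}

lemma taylorCoeff_of_eq_id_mul_deriv_mul (hf : AnalyticAt ℂ f 0) (hL : AnalyticAt ℂ L 0)
    (hf1 : deriv f 0 = 1) (hL0 : L 0 = 0)
    (h : ∀ᶠ z in 𝓝 0, z * deriv f z * (1 - L z) = f z) :
    taylorCoeff L 1 = taylorCoeff f 2 ∧
      taylorCoeff L 2 = 2 * taylorCoeff f 3 - 2 * taylorCoeff f 2 ^ 2 ∧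
      3 * taylorCoeff f 4 = 3 * taylorCoeff f 3 * taylorCoeff L 1
        + 2 * taylorCoeff f 2 * taylorCoeff L 2 + taylorCoeff L 3 := by
  have hcoeff (n : ℕ) : taylorCoeff f (n + 1) = ∑ i ∈ range (n + 1),
      (i + 1) * taylorCoeff f (i + 1) * taylorCoeff (fun z => 1 - L z) (n - i) := by
    have hf' := hf.deriv
    rw [← EventuallyEq.taylorCoeff_eq h, ← EventuallyEq.taylorCoeff_eq
      (Eventually.of_forall fun z => (mul_assoc z _ _).symm), taylorCoeff_id_mul
      (hf'.contDiffAt.mul (contDiffAt_const.sub hL.contDiffAt)),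
      taylorCoeff_mul hf'.contDiffAt (contDiffAt_const.sub hL.contDiffAt)]
    simp only [taylorCoeff_deriv]
  have ha1 : taylorCoeff f 1 = 1 := by rw [taylorCoeff_one, hf1]
  have h2 := hcoeff 1
  have h3 := hcoeff 2
  have h4 := hcoeff 3
  simp only [sum_range_succ, sum_range_zero, taylorCoeff_zero, ha1, hL0,
    Nat.reduceSub, taylorCoeff_const_sub one_ne_zero,
    taylorCoeff_const_sub two_ne_zero,
    taylorCoeff_const_sub three_ne_zero] at h2 h3 h4
  push_cast at h2 h3 h4
  refine ⟨?_, ?_, ?_⟩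
  · linear_combination h2
  · linear_combination h3 - 2 * taylorCoeff f 2 * h2
  · linear_combination -h4

lemma taylorCoeff_of_deriv_eq_one_add_mul_deriv (hw : AnalyticAt ℂ w 0) (hL : AnalyticAt ℂ L 0)
    (hw0 : w 0 = 0) (h : ∀ᶠ z in 𝓝 0, deriv w z = (1 + w z) * deriv L z) :
    taylorCoeff w 1 = taylorCoeff L 1 ∧
      2 * taylorCoeff w 2 = 2 * taylorCoeff L 2 + taylorCoeff w 1 * taylorCoeff L 1 ∧
      3 * taylorCoeff w 3 = 3 * taylorCoeff L 3 + 2 * taylorCoeff w 1 * taylorCoeff L 2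
        + taylorCoeff w 2 * taylorCoeff L 1 := by
  have hcoeff (n : ℕ) : (n + 1) * taylorCoeff w (n + 1) = ∑ i ∈ range (n + 1),
      taylorCoeff (fun z => 1 + w z) i * ((n - i + 1 : ℕ) * taylorCoeff L (n - i + 1)) := by
    rw [← taylorCoeff_deriv, EventuallyEq.taylorCoeff_eq h,
      taylorCoeff_mul (contDiffAt_const.add hw.contDiffAt) hL.deriv.contDiffAt]
    simp only [taylorCoeff_deriv, Nat.cast_add, Nat.cast_one]
  have h1 := hcoeff 0
  have h2 := hcoeff 1
  have h3 := hcoeff 2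
  simp only [sum_range_succ, sum_range_zero, taylorCoeff_zero, hw0, Nat.reduceSub,
    Nat.reduceAdd, taylorCoeff_const_add one_ne_zero,
    taylorCoeff_const_add two_ne_zero] at h1 h2 h3
  push_cast at h1 h2 h3
  refine ⟨?_, ?_, ?_⟩
  · linear_combination h1
  · linear_combination h2
  · linear_combination h3

lemma eventually_deriv_eq_one_add_mul_deriv_log (hw : AnalyticAt ℂ w 0) (hw0 : w 0 = 0) :
    ∀ᶠ z in 𝓝 0, deriv w z = (1 + w z) * deriv (fun z => log (1 + w z)) z := by
  have hslit : ∀ᶠ z in 𝓝 0, 1 + w z ∈ slitPlane :=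
    (continuousAt_const.add hw.continuousAt).eventually_mem
      (isOpen_slitPlane.mem_nhds (by simp [hw0]))
  filter_upwards [hslit, hw.eventually_analyticAt] with z hz hwz
  rw [((hwz.differentiableAt.hasDerivAt.const_add 1).clog hz).deriv,
    mul_div_cancel₀ _ (slitPlane_ne_zero hz)]

lemma three_mul_taylorCoeff_four_eq (hf : AnalyticAt ℂ f 0) (hw : AnalyticAt ℂ w 0)
    (hf1 : deriv f 0 = 1) (hw0 : w 0 = 0)
    (h : ∀ᶠ z in 𝓝 0, z * deriv f z * (1 - log (1 + w z)) = f z) :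
    3 * taylorCoeff f 4 = taylorCoeff w 3 + 5 / 2 * taylorCoeff w 1 * taylorCoeff w 2
      + 19 / 12 * taylorCoeff w 1 ^ 3 := by
  have hL : AnalyticAt ℂ (fun z => log (1 + w z)) 0 :=
    (analyticAt_const.add hw).clog (by simp [hw0])
  obtain ⟨hl1, hl2, ha4⟩ := taylorCoeff_of_eq_id_mul_deriv_mul hf hL hf1 (by simp [hw0]) h
  obtain ⟨hc1, hc2, hc3⟩ := taylorCoeff_of_deriv_eq_one_add_mul_deriv hw hL hw0
    (eventually_deriv_eq_one_add_mul_deriv_log hw hw0)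
  grind

end Coefficients

section Schur

lemma one_sub_conj_mul_ne_zero {u v : ℂ} (hu : ‖u‖ < 1) (hv : ‖v‖ ≤ 1) : 1 - conj v * u ≠ 0 := by
  refine sub_ne_zero.mpr fun h => ?_
  have : ‖conj v * u‖ < 1 := by
    rw [norm_mul, Complex.norm_conj]
    nlinarith [norm_nonneg u, norm_nonneg v]
  simp [← h] at this

lemma norm_sub_div_one_sub_conj_mul_lt_one {u v : ℂ} (hu : ‖u‖ < 1) (hv : ‖v‖ < 1) :
    ‖(u - v) / (1 - conj v * u)‖ < 1 := by
  have hden := one_sub_conj_mul_ne_zero hu hv.le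
  rw [norm_div, div_lt_one (norm_pos_iff.mpr hden), ← sq_lt_sq₀ (norm_nonneg _) (norm_nonneg _),
    ← sub_pos]
  have key : ‖1 - conj v * u‖ ^ 2 - ‖u - v‖ ^ 2 = (1 - ‖u‖ ^ 2) * (1 - ‖v‖ ^ 2) := by
    simp only [Complex.sq_norm, Complex.normSq_apply, Complex.sub_re, Complex.sub_im,
      Complex.mul_re, Complex.mul_im, Complex.one_re, Complex.one_im, Complex.conj_re,
      Complex.conj_im]
    ring
  rw [key]
  exact mul_pos (by nlinarith [norm_nonneg u]) (by nlinarith [norm_nonneg v])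

variable {g : ℂ → ℂ}

lemma mapsTo_ball_or_eqOn_const (hg : DifferentiableOn ℂ g (ball 0 1))
    (hg1 : MapsTo g (ball 0 1) (closedBall 0 1)) :
    MapsTo g (ball 0 1) (ball 0 1) ∨ EqOn g (fun _ => g 0) (ball 0 1) := by
  refine or_iff_not_imp_left.mpr fun hnot => ?_
  obtain ⟨z₀, hz₀, hgz₀⟩ := not_forall₂.mp hnot
  have hmax : IsMaxOn (norm ∘ g) (ball 0 1) z₀ := fun z hz => by
    have h1 : ‖g z‖ ≤ 1 := mem_closedBall_zero_iff.mp (hg1 hz)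
    have h2 : 1 ≤ ‖g z₀‖ := not_lt.mp (mt mem_ball_zero_iff.mpr hgz₀)
    exact h1.trans h2
  have hconst := Complex.eqOn_of_isPreconnected_of_isMaxOn_norm
    (convex_ball (0 : ℂ) 1).isPreconnected isOpen_ball hg hz₀ hmax
  intro z hz
  rw [hconst hz, hconst (mem_ball_self one_pos), Function.const_apply, Function.const_apply]

lemma exists_schur_transform_of_mapsTo_ball (hg : DifferentiableOn ℂ g (ball 0 1))
    (hg1 : MapsTo g (ball 0 1) (ball 0 1)) :
    ∃ h : ℂ → ℂ, DifferentiableOn ℂ h (ball 0 1) ∧ MapsTo h (ball 0 1) (closedBall 0 1) ∧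
      ∀ z ∈ ball (0 : ℂ) 1, g z - g 0 = z * h z * (1 - conj (g 0) * g z) := by
  have hnorm {z : ℂ} (hz : z ∈ ball (0 : ℂ) 1) : ‖g z‖ < 1 := mem_ball_zero_iff.mp (hg1 hz)
  have hg0 := hnorm (mem_ball_self one_pos)
  set φ : ℂ → ℂ := fun z => (g z - g 0) / (1 - conj (g 0) * g z)
  have hφ : DifferentiableOn ℂ φ (ball 0 1) :=
    (hg.sub_const _).div ((hg.const_mul _).const_sub 1)
      fun z hz => one_sub_conj_mul_ne_zero (hnorm hz) hg0.le
  have hφ0 : φ 0 = 0 := by simp [φ]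
  have hφ1 : MapsTo φ (ball 0 1) (closedBall (φ 0) 1) := fun z hz => by
    rw [hφ0, mem_closedBall_zero_iff]
    exact (norm_sub_div_one_sub_conj_mul_lt_one (hnorm hz) hg0).le
  have hB : ball (0 : ℂ) 1 ∈ 𝓝 0 := isOpen_ball.mem_nhds (mem_ball_self one_pos)
  refine ⟨dslope φ 0, (differentiableOn_dslope hB).mpr hφ, fun z hz => ?_, fun z hz => ?_⟩
  · simpa using Complex.norm_dslope_le_div_of_mapsTo_ball hφ hφ1 hz
  · have hφz : φ z = z * dslope φ 0 z := by
      simpa [hφ0] using (sub_smul_dslope φ 0 z).symm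
    rw [← hφz, div_mul_cancel₀ _ (one_sub_conj_mul_ne_zero (hnorm hz) hg0.le)]

lemma exists_schur_transform (hg : DifferentiableOn ℂ g (ball 0 1))
    (hg1 : MapsTo g (ball 0 1) (closedBall 0 1)) :
    ∃ h : ℂ → ℂ, DifferentiableOn ℂ h (ball 0 1) ∧ MapsTo h (ball 0 1) (closedBall 0 1) ∧
      ∀ z ∈ ball (0 : ℂ) 1, g z - g 0 = z * h z * (1 - conj (g 0) * g z) := by
  rcases mapsTo_ball_or_eqOn_const hg hg1 with hball | hconst
  · exact exists_schur_transform_of_mapsTo_ball hg hball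
  · refine ⟨0, differentiableOn_const 0, fun z _ => by simp, fun z hz => ?_⟩
    simp [hconst hz]

lemma taylorCoeff_of_schur_transform {h : ℂ → ℂ} (hg : AnalyticAt ℂ g 0)
    (hh : AnalyticAt ℂ h 0) (heq : ∀ᶠ z in 𝓝 0, g z - g 0 = z * h z * (1 - conj (g 0) * g z)) :
    taylorCoeff g 1 = h 0 * (1 - ‖g 0‖ ^ 2) ∧
      taylorCoeff g 2 = taylorCoeff h 1 * (1 - ‖g 0‖ ^ 2) - h 0 * conj (g 0) * taylorCoeff g 1 := by
  have hden : AnalyticAt ℂ (fun z => 1 - conj (g 0) * g z) 0 :=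
    analyticAt_const.sub (analyticAt_const.mul hg)
  have hcoeff (n : ℕ) : taylorCoeff g (n + 1) = ∑ i ∈ range (n + 1),
      taylorCoeff h i * taylorCoeff (fun z => 1 - conj (g 0) * g z) (n - i) := by
    have hg' : ∀ᶠ z in 𝓝 0, g z = g 0 + z * (h z * (1 - conj (g 0) * g z)) :=
      heq.mono fun z hz => by rw [← mul_assoc, ← hz, add_sub_cancel]
    rw [EventuallyEq.taylorCoeff_eq hg', taylorCoeff_const_add n.add_one_ne_zero,
      taylorCoeff_id_mul (hh.contDiffAt.mul hden.contDiffAt),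
      taylorCoeff_mul hh.contDiffAt hden.contDiffAt]
  have h1 := hcoeff 0
  have h2 := hcoeff 1
  simp only [sum_range_succ, sum_range_zero, taylorCoeff_zero, Nat.reduceSub,
    taylorCoeff_const_sub one_ne_zero, taylorCoeff_const_mul, Complex.conj_mul'] at h1 h2
  refine ⟨?_, ?_⟩
  · linear_combination h1
  · linear_combination h2

theorem exists_schur_parameters (hg : DifferentiableOn ℂ g (ball 0 1))
    (hg1 : MapsTo g (ball 0 1) (closedBall 0 1)) :
    ∃ d₀ d₁ : ℂ, ‖d₀‖ ≤ 1 ∧ ‖d₁‖ ≤ 1 - ‖d₀‖ ^ 2 ∧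
      taylorCoeff g 1 = d₀ * (1 - ‖g 0‖ ^ 2) ∧
      taylorCoeff g 2 = d₁ * (1 - ‖g 0‖ ^ 2) - d₀ * conj (g 0) * taylorCoeff g 1 := by
  have hB : ball (0 : ℂ) 1 ∈ 𝓝 0 := isOpen_ball.mem_nhds (mem_ball_self one_pos)
  obtain ⟨h, hh, hh1, hgh⟩ := exists_schur_transform hg hg1
  obtain ⟨k, hk, hk1, hhk⟩ := exists_schur_transform hh hh1
  obtain ⟨hg1', hg2'⟩ := taylorCoeff_of_schur_transform (hg.analyticAt hB) (hh.analyticAt hB)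
    (eventually_of_mem hB hgh)
  obtain ⟨hh1', -⟩ := taylorCoeff_of_schur_transform (hh.analyticAt hB) (hk.analyticAt hB)
    (eventually_of_mem hB hhk)
  have hnorm {u : ℂ → ℂ} (hu : MapsTo u (ball 0 1) (closedBall 0 1)) : ‖u 0‖ ≤ 1 :=
    mem_closedBall_zero_iff.mp (hu (mem_ball_self one_pos))
  refine ⟨h 0, taylorCoeff h 1, hnorm hh1, ?_, hg1', hg2'⟩
  have hh0 : 0 ≤ 1 - ‖h 0‖ ^ 2 := by nlinarith [hnorm hh1, norm_nonneg (h 0)]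
  calc ‖taylorCoeff h 1‖ = ‖k 0‖ * (1 - ‖h 0‖ ^ 2) := by
        rw [hh1', norm_mul, ← Complex.ofReal_one, ← Complex.ofReal_pow, ← Complex.ofReal_sub,
          Complex.norm_real, Real.norm_of_nonneg hh0]
    _ ≤ 1 - ‖h 0‖ ^ 2 := mul_le_of_le_one_left hh0 (hnorm hk1)

theorem exists_schur_parameters_of_schwarz {w : ℂ → ℂ} (hw : DifferentiableOn ℂ w (ball 0 1))
    (hw0 : w 0 = 0) (hw1 : MapsTo w (ball 0 1) (ball 0 1)) :
    ∃ d₀ d₁ : ℂ, ‖taylorCoeff w 1‖ ≤ 1 ∧ ‖d₀‖ ≤ 1 ∧ ‖d₁‖ ≤ 1 - ‖d₀‖ ^ 2 ∧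
      taylorCoeff w 2 = d₀ * (1 - ‖taylorCoeff w 1‖ ^ 2) ∧
      taylorCoeff w 3 = d₁ * (1 - ‖taylorCoeff w 1‖ ^ 2)
        - d₀ * conj (taylorCoeff w 1) * taylorCoeff w 2 := by
  have hB : ball (0 : ℂ) 1 ∈ 𝓝 0 := isOpen_ball.mem_nhds (mem_ball_self one_pos)
  have hg : DifferentiableOn ℂ (dslope w 0) (ball 0 1) := (differentiableOn_dslope hB).mpr hw
  have hg1 : MapsTo (dslope w 0) (ball 0 1) (closedBall 0 1) := fun z hz => by
    have hmaps : MapsTo w (ball 0 1) (closedBall (w 0) 1) := by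
      rw [hw0]
      exact hw1.mono_right ball_subset_closedBall
    simpa using Complex.norm_dslope_le_div_of_mapsTo_ball hw hmaps hz
  have hcoeff (n : ℕ) : taylorCoeff w (n + 1) = taylorCoeff (dslope w 0) n := by
    have hwg : w = fun z => z * dslope w 0 z := funext fun z => by
      simpa [hw0] using (sub_smul_dslope w 0 z).symm
    conv_lhs => rw [hwg]
    exact taylorCoeff_id_mul (hg.analyticAt hB).contDiffAt
  obtain ⟨d₀, d₁, hd₀, hd₁, h₁, h₂⟩ := exists_schur_parameters hg hg1
  refine ⟨d₀, d₁, ?_, hd₀, hd₁, ?_, ?_⟩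
  · rw [hcoeff 0, taylorCoeff_zero]
    exact mem_closedBall_zero_iff.mp (hg1 (mem_ball_self one_pos))
  · rw [hcoeff 0, hcoeff 1, taylorCoeff_zero, h₁]
  · rw [hcoeff 0, hcoeff 1, hcoeff 2, taylorCoeff_zero, h₂]

end Schur

section Inequality

lemma schur_bound_polynomial_nonneg {x t ρ : ℝ} (hx₀ : 0 ≤ x) (hx₁ : x ≤ 1) (ht₀ : 0 ≤ t) :
    0 ≤ 49 / 144 + 19 / 3 * ρ ^ 2 + 7 / 6 * t + 5 * t * ρ + t ^ 2 + 217 / 144 * x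
      - 95 / 12 * x * ρ - 17 / 4 * x * t - 5 * x * t * ρ - 2 * x * t ^ 2 + 361 / 144 * x ^ 2
      + 37 / 12 * x ^ 2 * t + x ^ 2 * t ^ 2 := by
  have htx : 0 ≤ t * (1 - x) := mul_nonneg ht₀ (by linarith)
  -- completing the square in `ρ` leaves a remainder with nonnegative coefficients
  nlinarith [sq_nonneg (38 / 3 * ρ + 5 * t * (1 - x) - 95 / 12 * x), sq_nonneg (t * (1 - x)),
    mul_nonneg htx (by linarith : 0 ≤ 266 / 9 + 19 / 18 * x), sq_nonneg x]

lemma norm_add_le_of_schur_parameters {c₁ c₂ c₃ d₀ d₁ : ℂ} (hc₁ : ‖c₁‖ ≤ 1) (hd₀ : ‖d₀‖ ≤ 1)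
    (hd₁ : ‖d₁‖ ≤ 1 - ‖d₀‖ ^ 2) (hc₂ : c₂ = d₀ * (1 - ‖c₁‖ ^ 2))
    (hc₃ : c₃ = d₁ * (1 - ‖c₁‖ ^ 2) - d₀ * conj c₁ * c₂) :
    ‖c₃ + 5 / 2 * c₁ * c₂ + 19 / 12 * c₁ ^ 3‖ ≤ 19 / 12 := by
  set x := Complex.normSq c₁
  set t := Complex.normSq d₀
  set ρ := (d₀ * conj c₁ ^ 2).re
  have hx : ‖c₁‖ ^ 2 = x := Complex.sq_norm c₁
  have ht : ‖d₀‖ ^ 2 = t := Complex.sq_norm d₀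
  have hx₀ : 0 ≤ x := Complex.normSq_nonneg c₁
  have hx₁ : x ≤ 1 := hx ▸ pow_le_one₀ (norm_nonneg _) hc₁
  have ht₀ : 0 ≤ t := Complex.normSq_nonneg d₀
  have ht₁ : t ≤ 1 := ht ▸ pow_le_one₀ (norm_nonneg _) hd₀
  set W := ((1 - x : ℝ) : ℂ) * (5 / 2 * c₁ * d₀ - d₀ ^ 2 * conj c₁) + 19 / 12 * c₁ ^ 3
  have hsplit : c₃ + 5 / 2 * c₁ * c₂ + 19 / 12 * c₁ ^ 3 = d₁ * ((1 - x : ℝ) : ℂ) + W := by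
    simp only [W, hc₃, hc₂, ← hx]
    push_cast
    ring
  have hW2 : ‖W‖ ^ 2 = (1 - x) ^ 2 * t ^ 2 * x + 25 / 4 * (1 - x) ^ 2 * t * x + 361 / 144 * x ^ 3
      - 5 * (1 - x) ^ 2 * t * ρ + 95 / 12 * (1 - x) * x * ρ
      - 19 / 6 * (1 - x) * (2 * ρ ^ 2 - t * x ^ 2) := by
    rw [Complex.sq_norm]
    simp only [W, ρ, x, t, Complex.normSq_apply, Complex.mul_re,
      Complex.mul_im, Complex.add_re, Complex.add_im, Complex.sub_re, Complex.sub_im,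
      Complex.ofReal_re, Complex.ofReal_im, Complex.conj_re, Complex.conj_im, pow_two, pow_three]
    norm_num
    ring
  have hW : ‖W‖ ≤ 19 / 12 - (1 - t) * (1 - x) := by
    have hR : 0 ≤ 19 / 12 - (1 - t) * (1 - x) := by nlinarith
    refine (pow_le_pow_iff_left₀ (norm_nonneg W) hR two_ne_zero).mp ?_
    -- the gap between the two squares is `1 - x` times the polynomial above
    nlinarith [mul_nonneg (sub_nonneg.mpr hx₁) (schur_bound_polynomial_nonneg (ρ := ρ) hx₀ hx₁ ht₀)]
  calc ‖c₃ + 5 / 2 * c₁ * c₂ + 19 / 12 * c₁ ^ 3‖ ≤ ‖d₁‖ * (1 - x) + ‖W‖ := by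
        rw [hsplit]
        refine (norm_add_le _ _).trans_eq ?_
        rw [norm_mul, Complex.norm_real, Real.norm_of_nonneg (sub_nonneg.mpr hx₁)]
    _ ≤ (1 - t) * (1 - x) + (19 / 12 - (1 - t) * (1 - x)) := by
        gcongr
        rwa [← ht]
    _ = 19 / 12 := by ring

end Inequality

theorem abs_a4_le (f : ℂ → ℂ) (hf : IsSB f) :
    ‖taylorCoeff f 4‖ ≤ 19 / 36 := by
  obtain ⟨hfd, -, hf1, w, hwd, hw0, hw1, heq⟩ := hf
  have hB : ball (0 : ℂ) 1 ∈ 𝓝 0 := isOpen_ball.mem_nhds (mem_ball_self one_pos)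
  have hcoeff := three_mul_taylorCoeff_four_eq (hfd.analyticAt hB) (hwd.analyticAt hB) hf1 hw0
    (eventually_of_mem hB heq)
  obtain ⟨d₀, d₁, hc₁, hd₀, hd₁, hc₂, hc₃⟩ := exists_schur_parameters_of_schwarz hwd hw0
    fun z hz => mem_ball_zero_iff.mpr (hw1 z hz)
  have hbound := norm_add_le_of_schur_parameters hc₁ hd₀ hd₁ hc₂ hc₃
  rw [← hcoeff, norm_mul, Complex.norm_ofNat] at hbound
  linarith
end

section
/- If f belongs to the class S*_B, then the second-order Toeplitz determinant T_{2,1}(f) = 1 − a_2² satisfies |1 − a_2²| ≤ 2. -/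
open Complex Metric

/-!
Differentiating `f z = z · (f' z · (1 - log (1 + w z)))` twice at `0` gives
`f''(0) = 2 (f''(0) - w'(0))`, so `a₂ = f''(0) / 2 = w'(0)`. By the Schwarz lemma `|w'(0)| ≤ 1`,
hence `|1 - a₂²| ≤ 1 + |a₂|² ≤ 2`.
-/

open Filter Topology

lemma deriv_deriv_id_mul {𝕜 : Type*} [NontriviallyNormedField 𝕜] [CompleteSpace 𝕜]
    {G : 𝕜 → 𝕜} {x : 𝕜} (hG : AnalyticAt 𝕜 G x) :
    deriv (deriv fun z => z * G z) x = 2 * deriv G x + x * deriv (deriv G) x := by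
  have hderiv : deriv (fun z => z * G z) =ᶠ[𝓝 x] fun z => G z + z * deriv G z := by
    filter_upwards [hG.eventually_analyticAt] with z hz
    have h : HasDerivAt (fun z => z * G z) (1 * G z + z * deriv G z) z :=
      (hasDerivAt_id z).mul hz.differentiableAt.hasDerivAt
    rw [h.deriv, one_mul]
  have hG' : HasDerivAt (fun z => G z + z * deriv G z)
      (deriv G x + (1 * deriv G x + x * deriv (deriv G) x)) x :=
    hG.differentiableAt.hasDerivAt.add
      ((hasDerivAt_id x).mul hG.deriv.differentiableAt.hasDerivAt)
  rw [hderiv.deriv_eq, hG'.deriv]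
  ring

lemma taylorCoeff_two (f : ℂ → ℂ) : taylorCoeff f 2 = deriv (deriv f) 0 / 2 := by
  rw [taylorCoeff, iteratedDeriv_succ, iteratedDeriv_one]
  norm_num

lemma deriv_deriv_eq_two_mul_deriv_of_eq_mul_one_sub_log {f w : ℂ → ℂ}
    (hf : AnalyticAt ℂ f 0) (hw : AnalyticAt ℂ w 0) (hw0 : w 0 = 0) (hf1 : deriv f 0 = 1)
    (heq : ∀ᶠ z in 𝓝 0, z * deriv f z * (1 - log (1 + w z)) = f z) :
    deriv (deriv f) 0 = 2 * deriv w 0 := by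
  have hslit : 1 + w 0 ∈ slitPlane := by simp [hw0]
  have hG : AnalyticAt ℂ (fun z => deriv f z * (1 - log (1 + w z))) 0 :=
    hf.deriv.mul (analyticAt_const.sub ((analyticAt_const.add hw).clog hslit))
  have hG' : HasDerivAt (fun z => deriv f z * (1 - log (1 + w z)))
      (deriv (deriv f) 0 * (1 - log (1 + w 0)) +
        deriv f 0 * (0 - (0 + deriv w 0) / (1 + w 0))) 0 :=
    hf.deriv.differentiableAt.hasDerivAt.mul
      ((hasDerivAt_const _ _).sub
        (((hasDerivAt_const _ _).add hw.differentiableAt.hasDerivAt).clog hslit))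
  have hfG : (fun z => z * (deriv f z * (1 - log (1 + w z)))) =ᶠ[𝓝 0] f := by
    filter_upwards [heq] with z hz
    rw [← hz, mul_assoc]
  have key := deriv_deriv_id_mul hG
  rw [hfG.deriv.deriv_eq, hG'.deriv, hw0, hf1] at key
  simp only [zero_mul, add_zero, log_one, sub_zero, zero_add, div_one, mul_one, one_mul] at key
  linear_combination -key

lemma IsSB.norm_taylorCoeff_two_le_one {f : ℂ → ℂ} (hf : IsSB f) : ‖taylorCoeff f 2‖ ≤ 1 := by
  obtain ⟨hfd, -, hf1, w, hwd, hw0, hwb, heq⟩ := hf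
  have hball : ball (0 : ℂ) 1 ∈ 𝓝 0 := ball_mem_nhds 0 one_pos
  have hf2 : deriv (deriv f) 0 = 2 * deriv w 0 :=
    deriv_deriv_eq_two_mul_deriv_of_eq_mul_one_sub_log (hfd.analyticAt hball)
      (hwd.analyticAt hball) hw0 hf1 (eventually_of_mem hball heq)
  have hmaps : Set.MapsTo w (ball 0 1) (closedBall (w 0) 1) := fun z hz => by
    simpa [hw0] using (hwb z hz).le
  rw [taylorCoeff_two, hf2, mul_div_cancel_left₀ _ two_ne_zero]
  exact norm_deriv_le_one_of_mapsTo_ball hwd hmaps one_pos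

lemma norm_one_sub_sq_le_two {R : Type*} [NormedRing R] [NormOneClass R] {b : R}
    (hb : ‖b‖ ≤ 1) : ‖1 - b ^ 2‖ ≤ 2 :=
  calc ‖1 - b ^ 2‖ ≤ ‖(1 : R)‖ + ‖b‖ ^ 2 := (norm_sub_le _ _).trans (by gcongr; exact norm_pow_le _ _)
    _ ≤ 2 := by rw [norm_one]; nlinarith [norm_nonneg b]

theorem toeplitz_T21 (f : ℂ → ℂ) (hf : IsSB f) :
    ‖1 - (taylorCoeff f 2) ^ 2‖ ≤ 2 :=
  norm_one_sub_sq_le_two hf.norm_taylorCoeff_two_le_one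
end

section
/- If f belongs to the class S*_B, then the second-order Toeplitz determinant of the logarithmic coefficients of its inverse satisfies |Γ_1² − Γ_2²| ≤ 25/64; equivalently, |9·a_2⁴ − 4·a_2² + 4·a_3² − 12·a_2²·a_3| ≤ 25/4, where Γ_1 = −a_2/2 and Γ_2 = −(a_3 − (3/2)a_2²)/2. -/
open Complex Metric

/-!
Write `w(z) = c₁ z + c₂ z² + ⋯` for the Schwarz function of `f`. Differentiating
`f = z f' (1 - log (1 + w))` twice at `0` gives `a₂ = c₁` and `a₃ = (3 c₁² + 2 c₂) / 4`, so
`4 (9 a₂⁴ - 4 a₂² + 4 a₃² - 12 a₂² a₃) = 9 c₁⁴ - 16 c₁² - 12 c₁² c₂ + 4 c₂²`.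
The Schwarz–Pick inequality applied to `w(z) / z` gives `|c₂| ≤ 1 - |c₁|²`, and with this the
triangle inequality bounds the right-hand side by `|c₁|⁴ + 20 |c₁|² + 4 ≤ 25`.
-/

open ComplexConjugate Set Filter Topology

lemma one_sub_conj_mul_ne_zero_s14 {c ζ : ℂ} (hc : ‖c‖ < 1) (hζ : ‖ζ‖ < 1) :
    1 - conj c * ζ ≠ 0 := by
  have : ‖conj c * ζ‖ < 1 := by
    rw [norm_mul, norm_conj]
    exact mul_lt_one_of_nonneg_of_lt_one_left (norm_nonneg _) hc hζ.le
  exact sub_ne_zero.mpr fun h => by rw [← h, norm_one] at this; exact this.false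

lemma norm_sub_div_one_sub_conj_mul_lt_one_s14 {c ζ : ℂ} (hc : ‖c‖ < 1) (hζ : ‖ζ‖ < 1) :
    ‖(ζ - c) / (1 - conj c * ζ)‖ < 1 := by
  rw [norm_div, div_lt_one (norm_pos_iff.mpr (one_sub_conj_mul_ne_zero_s14 hc hζ)),
    ← sq_lt_sq₀ (norm_nonneg _) (norm_nonneg _), ← normSq_eq_norm_sq, ← normSq_eq_norm_sq]
  have hc' : normSq c < 1 := by
    rw [normSq_eq_norm_sq]; exact pow_lt_one₀ (norm_nonneg _) hc two_ne_zero
  have hζ' : normSq ζ < 1 := by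
    rw [normSq_eq_norm_sq]; exact pow_lt_one₀ (norm_nonneg _) hζ two_ne_zero
  have key : normSq (1 - conj c * ζ) - normSq (ζ - c) = (1 - normSq c) * (1 - normSq ζ) := by
    simp only [normSq_apply, sub_re, sub_im, mul_re, mul_im, one_re, one_im, conj_re, conj_im]
    ring
  nlinarith [mul_pos (sub_pos.mpr hc') (sub_pos.mpr hζ')]

/-- The Schwarz–Pick inequality at the centre of the disk. -/
lemma norm_deriv_zero_le_of_mapsTo_ball {v : ℂ → ℂ} (hd : DifferentiableOn ℂ v (ball 0 1))
    (hv : MapsTo v (ball 0 1) (ball 0 1)) : ‖deriv v 0‖ ≤ 1 - ‖v 0‖ ^ 2 := by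
  set c := v 0
  have h0 : (0 : ℂ) ∈ ball 0 1 := mem_ball_self one_pos
  have hc : ‖c‖ < 1 := mem_ball_zero_iff.mp (hv h0)
  have hden : ∀ z ∈ ball (0 : ℂ) 1, 1 - conj c * v z ≠ 0 := fun z hz =>
    one_sub_conj_mul_ne_zero_s14 hc (mem_ball_zero_iff.mp (hv hz))
  -- the Schwarz lemma applies to `v` followed by the disk automorphism sending `c` to `0`
  set h : ℂ → ℂ := fun z => (v z - c) / (1 - conj c * v z)
  have hhd : DifferentiableOn ℂ h (ball 0 1) :=
    (hd.sub_const c).div ((differentiableOn_const 1).sub (hd.const_mul _)) hden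
  have hh : MapsTo h (ball 0 1) (closedBall (h 0) 1) := fun z hz => by
    simpa [h, c] using (norm_sub_div_one_sub_conj_mul_lt_one_s14 hc (mem_ball_zero_iff.mp (hv hz))).le
  have hderiv : deriv h 0 = deriv v 0 / (1 - conj c * c) := by
    have hv0 := (hd.differentiableAt (ball_mem_nhds 0 one_pos)).hasDerivAt
    rw [((hv0.sub_const c).fun_div ((hv0.const_mul (conj c)).const_sub 1) (hden 0 h0)).deriv,
      show v 0 = c from rfl, sub_self, zero_mul, sub_zero, pow_two,
      mul_div_mul_right _ _ (hden 0 h0)]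
  have hc2 : 1 - conj c * c = ((1 - ‖c‖ ^ 2 : ℝ) : ℂ) := by push_cast; rw [conj_mul']
  have hpos : 0 < 1 - ‖c‖ ^ 2 := sub_pos.mpr (pow_lt_one₀ (norm_nonneg _) hc two_ne_zero)
  have := norm_deriv_le_one_of_mapsTo_ball hhd hh one_pos
  rwa [hderiv, hc2, norm_div, norm_real, Real.norm_of_nonneg hpos.le, div_le_one hpos] at this

lemma norm_deriv_zero_le_of_mapsTo_closedBall {v : ℂ → ℂ} (hd : DifferentiableOn ℂ v (ball 0 1))
    (hv : MapsTo v (ball 0 1) (closedBall 0 1)) : ‖deriv v 0‖ ≤ 1 - ‖v 0‖ ^ 2 := by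
  by_cases hlt : MapsTo v (ball 0 1) (ball 0 1)
  · exact norm_deriv_zero_le_of_mapsTo_ball hd hlt
  obtain ⟨z₀, hz₀, hv₀⟩ : ∃ z₀ ∈ ball (0 : ℂ) 1, ‖v z₀‖ = 1 := by
    simp only [MapsTo, not_forall] at hlt
    obtain ⟨z₀, hz₀, hv₀⟩ := hlt
    exact ⟨z₀, hz₀, le_antisymm (mem_closedBall_zero_iff.mp (hv hz₀))
      (not_lt.mp (mt mem_ball_zero_iff.mpr hv₀))⟩
  have hconst : EqOn v (fun _ => v z₀) (ball 0 1) :=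
    eqOn_of_isPreconnected_of_isMaxOn_norm (convex_ball 0 1).isPreconnected isOpen_ball hd hz₀
      fun z hz => by simpa [hv₀] using hv hz
  rw [(hconst.eventuallyEq_of_mem (ball_mem_nhds 0 one_pos)).deriv_eq,
    hconst (mem_ball_self one_pos), hv₀]
  simp

lemma iteratedDeriv_succ_mul_id_zero {𝕜 : Type*} [NontriviallyNormedField 𝕜] {h : 𝕜 → 𝕜}
    {n : ℕ} (hh : ContDiffAt 𝕜 (n + 1 : ℕ) h 0) :
    iteratedDeriv (n + 1) (fun z => z * h z) 0 = (n + 1) * iteratedDeriv n h 0 := by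
  rw [iteratedDeriv_fun_mul (f := fun z => z) contDiffAt_id hh, Finset.sum_eq_single 1]
  · simp [iteratedDeriv_fun_id_zero]
  · intro i _ hi
    simp [iteratedDeriv_fun_id_zero, hi]
  · simp

lemma norm_iteratedDeriv_two_le_of_mapsTo_ball {w : ℂ → ℂ} (hd : DifferentiableOn ℂ w (ball 0 1))
    (hw₀ : w 0 = 0) (hw : MapsTo w (ball 0 1) (ball 0 1)) :
    ‖iteratedDeriv 2 w 0‖ / 2 ≤ 1 - ‖deriv w 0‖ ^ 2 := by
  have h0 : ball (0 : ℂ) 1 ∈ 𝓝 0 := ball_mem_nhds 0 one_pos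
  set v := dslope w 0
  have hvd : DifferentiableOn ℂ v (ball 0 1) := (differentiableOn_dslope h0).mpr hd
  have hv : MapsTo v (ball 0 1) (closedBall 0 1) := fun z hz => by
    simpa using norm_dslope_le_div_of_mapsTo_ball hd
      (by simpa [hw₀] using hw.mono_right ball_subset_closedBall) hz
  have hwv : w = fun z => z * v z := funext fun z => by
    simpa [hw₀] using (sub_smul_dslope w 0 z).symm
  have h2 : iteratedDeriv 2 w 0 = 2 * deriv v 0 := by
    rw [hwv, iteratedDeriv_succ_mul_id_zero ((hvd.analyticAt h0).contDiffAt), iteratedDeriv_one]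
    norm_num
  have hpick := norm_deriv_zero_le_of_mapsTo_closedBall hvd hv
  rw [show v 0 = deriv w 0 from dslope_same w 0] at hpick
  simpa [h2] using hpick

lemma iteratedDeriv_two_clog_comp {g : ℂ → ℂ} {x : ℂ} (hg : AnalyticAt ℂ g x)
    (hx : g x ∈ slitPlane) :
    iteratedDeriv 2 (fun z => log (g z)) x =
      (iteratedDeriv 2 g x * g x - deriv g x ^ 2) / g x ^ 2 := by
  have hderiv : deriv (fun z => log (g z)) =ᶠ[𝓝 x] fun z => deriv g z / g z := by
    filter_upwards [hg.eventually_analyticAt, hg.continuousAt.eventually_mem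
      (isOpen_slitPlane.mem_nhds hx)] with z hgz hz
    exact (hgz.differentiableAt.hasDerivAt.clog hz).deriv
  rw [iteratedDeriv_succ, iteratedDeriv_one, hderiv.deriv_eq, iteratedDeriv_succ,
    iteratedDeriv_one, deriv_fun_div hg.deriv.differentiableAt hg.differentiableAt
      (slitPlane_ne_zero hx)]
  ring

lemma iteratedDeriv_eq_of_eq_mul_one_sub_log {f w : ℂ → ℂ} (hf : AnalyticAt ℂ f 0)
    (hw : AnalyticAt ℂ w 0) (hw₀ : w 0 = 0) (hf₁ : deriv f 0 = 1)
    (heq : f =ᶠ[𝓝 0] fun z => z * (deriv f z * (1 - log (1 + w z)))) :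
    iteratedDeriv 2 f 0 = 2 * deriv w 0 ∧
      2 * iteratedDeriv 3 f 0 = 9 * deriv w 0 ^ 2 + 3 * iteratedDeriv 2 w 0 := by
  set L : ℂ → ℂ := fun z => 1 - log (1 + w z)
  have h1w : AnalyticAt ℂ (fun z => 1 + w z) 0 := analyticAt_const.add hw
  have hslit : 1 + w 0 ∈ slitPlane := by simp [hw₀]
  have hL : AnalyticAt ℂ L 0 := analyticAt_const.sub (h1w.clog hslit)
  have hL₀ : L 0 = 1 := by simp [L, hw₀]
  have hL₁ : deriv L 0 = -deriv w 0 := by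
    simp only [L, ((h1w.differentiableAt.hasDerivAt.clog hslit).const_sub 1).deriv,
      deriv_const_add', hw₀, add_zero, div_one]
  have hL₂ : iteratedDeriv 2 L 0 = deriv w 0 ^ 2 - iteratedDeriv 2 w 0 := by
    rw [iteratedDeriv_const_sub two_pos]
    simp only [iteratedDeriv_neg, iteratedDeriv_two_clog_comp h1w hslit,
      iteratedDeriv_const_add two_pos, deriv_const_add, hw₀]
    ring
  -- `f = z · (f' L)`, so the coefficients of `f` are read off from those of `f' L` by Leibniz
  have hcoeff (n : ℕ) : iteratedDeriv (n + 1) f 0 = (n + 1) * iteratedDeriv n (deriv f * L) 0 :=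
    (heq.iteratedDeriv_eq _).trans
      (iteratedDeriv_succ_mul_id_zero (hf.deriv.contDiffAt.mul hL.contDiffAt))
  have h2 := hcoeff 1
  have h3 := hcoeff 2
  rw [iteratedDeriv_mul hf.deriv.contDiffAt hL.contDiffAt] at h2 h3
  simp only [Nat.reduceAdd, Nat.cast_one, ← iteratedDeriv_succ', Finset.sum_range_succ,
    Finset.range_one, Finset.sum_singleton, Nat.choose_succ_self_right, zero_add,
    iteratedDeriv_one, hf₁, mul_one, tsub_zero, hL₁, mul_neg, one_mul, Nat.choose_self,
    tsub_self, iteratedDeriv_zero, hL₀, Nat.cast_ofNat, Nat.choose_zero_right, hL₂,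
    Nat.add_one_sub_one] at h2 h3
  have hc₂ : iteratedDeriv 2 f 0 = 2 * deriv w 0 := by linear_combination -h2
  exact ⟨hc₂, by linear_combination -h3 + 6 * deriv w 0 * hc₂⟩

lemma norm_toeplitz_poly_le {c₁ c₂ : ℂ} (h : ‖c₂‖ ≤ 1 - ‖c₁‖ ^ 2) :
    ‖9 * c₁ ^ 4 - 16 * c₁ ^ 2 - 12 * c₁ ^ 2 * c₂ + 4 * c₂ ^ 2‖ ≤ 25 := by
  calc ‖9 * c₁ ^ 4 - 16 * c₁ ^ 2 - 12 * c₁ ^ 2 * c₂ + 4 * c₂ ^ 2‖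
      ≤ ‖9 * c₁ ^ 4‖ + ‖16 * c₁ ^ 2‖ + ‖12 * c₁ ^ 2 * c₂‖ + ‖4 * c₂ ^ 2‖ := by
        grw [norm_add_le, norm_sub_le, norm_sub_le]
    _ = 9 * ‖c₁‖ ^ 4 + 16 * ‖c₁‖ ^ 2 + 12 * ‖c₁‖ ^ 2 * ‖c₂‖ + 4 * ‖c₂‖ ^ 2 := by
        simp only [norm_mul, norm_pow]; norm_num
    _ ≤ 25 := by
        nlinarith [norm_nonneg c₁, norm_nonneg c₂, mul_nonneg (sq_nonneg ‖c₁‖) (sub_nonneg.mpr h)]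

theorem toeplitz_log_coeff_inverse (f : ℂ → ℂ) (hf : IsSB f) :
    ‖(-(taylorCoeff f 2) / 2) ^ 2 -
        (-(taylorCoeff f 3 - (3 / 2) * (taylorCoeff f 2) ^ 2) / 2) ^ 2‖ ≤ 25 / 64 ∧
    ‖9 * (taylorCoeff f 2) ^ 4 - 4 * (taylorCoeff f 2) ^ 2 +
        4 * (taylorCoeff f 3) ^ 2 - 12 * (taylorCoeff f 2) ^ 2 * taylorCoeff f 3‖ ≤ 25 / 4 := by
  obtain ⟨hfd, -, hf₁, w, hwd, hw₀, hwb, heq⟩ := hf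
  have h0 : ball (0 : ℂ) 1 ∈ 𝓝 0 := ball_mem_nhds 0 one_pos
  obtain ⟨hf₂, hf₃⟩ := iteratedDeriv_eq_of_eq_mul_one_sub_log (hfd.analyticAt h0)
    (hwd.analyticAt h0) hw₀ hf₁ (eventually_of_mem h0 fun z hz => by rw [← heq z hz, mul_assoc])
  have hc₂ := norm_iteratedDeriv_two_le_of_mapsTo_ball hwd hw₀
    fun z hz => mem_ball_zero_iff.mpr (hwb z hz)
  set c₁ := deriv w 0
  set c₂ := iteratedDeriv 2 w 0 / 2
  have hpoly : 9 * taylorCoeff f 2 ^ 4 - 4 * taylorCoeff f 2 ^ 2 + 4 * taylorCoeff f 3 ^ 2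
      - 12 * taylorCoeff f 2 ^ 2 * taylorCoeff f 3
      = (9 * c₁ ^ 4 - 16 * c₁ ^ 2 - 12 * c₁ ^ 2 * c₂ + 4 * c₂ ^ 2) / 4 := by
    have ha₃ : taylorCoeff f 3 = (3 * c₁ ^ 2 + 2 * c₂) / 4 := by
      rw [taylorCoeff]; norm_num [Nat.factorial]; linear_combination hf₃ / 12
    rw [ha₃, taylorCoeff, hf₂]; norm_num; ring
  have hbound : ‖9 * taylorCoeff f 2 ^ 4 - 4 * taylorCoeff f 2 ^ 2 + 4 * taylorCoeff f 3 ^ 2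
      - 12 * taylorCoeff f 2 ^ 2 * taylorCoeff f 3‖ ≤ 25 / 4 := by
    rw [hpoly, norm_div, RCLike.norm_ofNat]
    gcongr
    exact norm_toeplitz_poly_le (by simpa [c₂, norm_div] using hc₂)
  refine ⟨?_, hbound⟩
  rw [show ∀ a₂ a₃ : ℂ, (-a₂ / 2) ^ 2 - (-(a₃ - 3 / 2 * a₂ ^ 2) / 2) ^ 2
      = -(9 * a₂ ^ 4 - 4 * a₂ ^ 2 + 4 * a₃ ^ 2 - 12 * a₂ ^ 2 * a₃) / 16 by intros; ring,
    norm_div, norm_neg, RCLike.norm_ofNat]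
  linarith
end
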